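/- arXiv:2509.02389 — 4 statements merged into one kernel-verified Lean document; each statement's English description precedes it below -/
import Mathlib

section
/- There exists a constant C > 0 such that for every λ ∈ [1/2, 2], the map ũ_λ − ũ_1 : ℝ² → ℝ³ is differentiable with square-integrable derivative and ∫_{ℝ²} Σ_{i=1}^{2} Σ_{j=1}^{3} (∂_i(ũ_λ − ũ_1)^j(X,Y))² dX dY ≤ C (λ − 1)². -/
/-!
Since `ũ_λ(p) = ũ_1(λp)` and `ũ_1` is conformal, `Dũ_1(x)` being `2 / (1 + |x|²)` times a
linear isometry, the Dirichlet density of `ũ_λ - ũ_1` at `p` is `|λ Dũ_1(λp) - Dũ_1(p)|²`.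
With `s = |p|²` the cross term is `16 λ (1 + λs)² / ((1 + λ²s)² (1 + s)²)`, and the density
collapses to `8 (λ - 1)² (1 + λ²s²) / ((1 + λ²s)² (1 + s)²)`. For `λ ≥ 1/2` this is at most
`32 (λ - 1)² / ((1 + X²)(1 + Y²))`, whose integral over the plane is `32 π² (λ - 1)²`.
-/

open MeasureTheory

/-- The stereographic dilation `u_λ = Π ∘ D_λ ∘ Π⁻¹` read in stereographic
coordinates. -/
noncomputable def utilde (lam : ℝ) (p : ℝ × ℝ) : Fin 3 → ℝ :=
  ![2 * lam * p.1 / (1 + lam ^ 2 * (p.1 ^ 2 + p.2 ^ 2)),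
    2 * lam * p.2 / (1 + lam ^ 2 * (p.1 ^ 2 + p.2 ^ 2)),
    (lam ^ 2 * (p.1 ^ 2 + p.2 ^ 2) - 1) / (1 + lam ^ 2 * (p.1 ^ 2 + p.2 ^ 2))]

section Partials

variable {E : Type*} [NormedAddCommGroup E] [NormedSpace ℝ E]
  {f : ℝ × ℝ → E} {p : ℝ × ℝ} {a : E}

theorem fderiv_apply_one_zero_eq (hf : DifferentiableAt ℝ f p)
    (h : HasDerivAt (fun x => f (x, p.2)) a p.1) : fderiv ℝ f p (1, 0) = a :=
  (hf.hasFDerivAt.comp_hasDerivAt p.1 ((hasDerivAt_id _).prodMk (hasDerivAt_const _ _))).unique h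

theorem fderiv_apply_zero_one_eq (hf : DifferentiableAt ℝ f p)
    (h : HasDerivAt (fun y => f (p.1, y)) a p.2) : fderiv ℝ f p (0, 1) = a :=
  (hf.hasFDerivAt.comp_hasDerivAt p.2 ((hasDerivAt_const _ _).prodMk (hasDerivAt_id _))).unique h

end Partials

theorem differentiable_utilde (lam : ℝ) (j : Fin 3) :
    Differentiable ℝ (fun p : ℝ × ℝ => utilde lam p j) := by
  fin_cases j <;>
    simp only [utilde, Fin.zero_eta, Fin.mk_one, Fin.reduceFinMk, Matrix.cons_val,
      div_eq_mul_inv] <;>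
    fun_prop (disch := intros; positivity)

noncomputable def utildeDerivFst (lam : ℝ) (p : ℝ × ℝ) : Fin 3 → ℝ :=
  ![2 * lam * (1 + lam ^ 2 * (p.2 ^ 2 - p.1 ^ 2)) / (1 + lam ^ 2 * (p.1 ^ 2 + p.2 ^ 2)) ^ 2,
    -(4 * lam ^ 3 * p.1 * p.2) / (1 + lam ^ 2 * (p.1 ^ 2 + p.2 ^ 2)) ^ 2,
    4 * lam ^ 2 * p.1 / (1 + lam ^ 2 * (p.1 ^ 2 + p.2 ^ 2)) ^ 2]

noncomputable def utildeDerivSnd (lam : ℝ) (p : ℝ × ℝ) : Fin 3 → ℝ :=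
  ![-(4 * lam ^ 3 * p.1 * p.2) / (1 + lam ^ 2 * (p.1 ^ 2 + p.2 ^ 2)) ^ 2,
    2 * lam * (1 + lam ^ 2 * (p.1 ^ 2 - p.2 ^ 2)) / (1 + lam ^ 2 * (p.1 ^ 2 + p.2 ^ 2)) ^ 2,
    4 * lam ^ 2 * p.2 / (1 + lam ^ 2 * (p.1 ^ 2 + p.2 ^ 2)) ^ 2]

theorem hasDerivAt_utilde_fst (lam X Y : ℝ) :
    HasDerivAt (fun x => utilde lam (x, Y)) (utildeDerivFst lam (X, Y)) X := by
  have hs : HasDerivAt (fun x => lam ^ 2 * (x ^ 2 + Y ^ 2)) (lam ^ 2 * (2 * X)) X := by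
    simpa using ((hasDerivAt_pow 2 X).add_const (Y ^ 2)).const_mul (lam ^ 2)
  have hD : 1 + lam ^ 2 * (X ^ 2 + Y ^ 2) ≠ 0 := by positivity
  refine hasDerivAt_pi.2 fun j => ?_
  fin_cases j <;>
    simp only [utilde, utildeDerivFst, Fin.zero_eta, Fin.mk_one, Fin.reduceFinMk, Matrix.cons_val]
  · refine (((hasDerivAt_id' X).const_mul (2 * lam)).div (hs.const_add 1) hD).congr_deriv ?_
    field_simp
    ring
  · refine ((hasDerivAt_const X (2 * lam * Y)).div (hs.const_add 1) hD).congr_deriv ?_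
    field_simp
    ring
  · refine ((hs.sub_const 1).div (hs.const_add 1) hD).congr_deriv ?_
    field_simp
    ring

theorem hasDerivAt_utilde_snd (lam X Y : ℝ) :
    HasDerivAt (fun y => utilde lam (X, y)) (utildeDerivSnd lam (X, Y)) Y := by
  have hs : HasDerivAt (fun y => lam ^ 2 * (X ^ 2 + y ^ 2)) (lam ^ 2 * (2 * Y)) Y := by
    simpa using ((hasDerivAt_pow 2 Y).const_add (X ^ 2)).const_mul (lam ^ 2)
  have hD : 1 + lam ^ 2 * (X ^ 2 + Y ^ 2) ≠ 0 := by positivity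
  refine hasDerivAt_pi.2 fun j => ?_
  fin_cases j <;>
    simp only [utilde, utildeDerivSnd, Fin.zero_eta, Fin.mk_one, Fin.reduceFinMk, Matrix.cons_val]
  · refine ((hasDerivAt_const Y (2 * lam * X)).div (hs.const_add 1) hD).congr_deriv ?_
    field_simp
    ring
  · refine (((hasDerivAt_id' Y).const_mul (2 * lam)).div (hs.const_add 1) hD).congr_deriv ?_
    field_simp
    ring
  · refine ((hs.sub_const 1).div (hs.const_add 1) hD).congr_deriv ?_
    field_simp
    ring

noncomputable def utildeDirichletDensity (lam : ℝ) (p : ℝ × ℝ) : ℝ :=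
  ∑ j : Fin 3,
    ((fderiv ℝ (fun q : ℝ × ℝ => utilde lam q j - utilde 1 q j) p (1, 0)) ^ 2 +
     (fderiv ℝ (fun q : ℝ × ℝ => utilde lam q j - utilde 1 q j) p (0, 1)) ^ 2)

theorem utildeDirichletDensity_eq (lam : ℝ) (p : ℝ × ℝ) :
    utildeDirichletDensity lam p = 8 * (lam - 1) ^ 2 * (1 + lam ^ 2 * (p.1 ^ 2 + p.2 ^ 2) ^ 2) /
      ((1 + lam ^ 2 * (p.1 ^ 2 + p.2 ^ 2)) ^ 2 * (1 + (p.1 ^ 2 + p.2 ^ 2)) ^ 2) := by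
  have hdiff (j : Fin 3) : DifferentiableAt ℝ (fun q => utilde lam q j - utilde 1 q j) p :=
    ((differentiable_utilde lam j).sub (differentiable_utilde 1 j)) p
  have hfst (j : Fin 3) := fderiv_apply_one_zero_eq (hdiff j)
    ((hasDerivAt_pi.1 (hasDerivAt_utilde_fst lam p.1 p.2) j).sub
      (hasDerivAt_pi.1 (hasDerivAt_utilde_fst 1 p.1 p.2) j))
  have hsnd (j : Fin 3) := fderiv_apply_zero_one_eq (hdiff j)
    ((hasDerivAt_pi.1 (hasDerivAt_utilde_snd lam p.1 p.2) j).sub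
      (hasDerivAt_pi.1 (hasDerivAt_utilde_snd 1 p.1 p.2) j))
  simp only [utildeDirichletDensity, hfst, hsnd, Fin.sum_univ_three, utildeDerivFst,
    utildeDerivSnd, Matrix.cons_val]
  field_simp
  ring

theorem one_add_sq_mul_sq_le {lam s : ℝ} (hlam : 1 / 2 ≤ lam) (hs : 0 ≤ s) :
    1 + lam ^ 2 * s ^ 2 ≤ 4 * (1 + lam ^ 2 * s) ^ 2 := by
  have hquartic : lam ^ 2 * s ^ 2 ≤ 4 * (lam ^ 2 * s) ^ 2 := by
    nlinarith [mul_nonneg (sq_nonneg (lam * s)) (by nlinarith : (0 : ℝ) ≤ 4 * lam ^ 2 - 1)]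
  nlinarith [mul_nonneg (sq_nonneg lam) hs]

theorem one_add_sq_mul_one_add_sq_le (x y : ℝ) :
    (1 + x ^ 2) * (1 + y ^ 2) ≤ (1 + (x ^ 2 + y ^ 2)) ^ 2 := by
  nlinarith [sq_nonneg x, sq_nonneg y, mul_nonneg (sq_nonneg x) (sq_nonneg y)]

theorem utildeDirichletDensity_le {lam : ℝ} (hlam : 1 / 2 ≤ lam) (p : ℝ × ℝ) :
    utildeDirichletDensity lam p ≤
      32 * (lam - 1) ^ 2 * ((1 + p.1 ^ 2)⁻¹ * (1 + p.2 ^ 2)⁻¹) := by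
  set s := p.1 ^ 2 + p.2 ^ 2
  have hs : 0 ≤ s := by positivity
  rw [utildeDirichletDensity_eq, ← mul_inv, ← div_eq_mul_inv,
    div_le_div_iff₀ (by positivity) (by positivity)]
  calc 8 * (lam - 1) ^ 2 * (1 + lam ^ 2 * s ^ 2) * ((1 + p.1 ^ 2) * (1 + p.2 ^ 2))
      ≤ 8 * (lam - 1) ^ 2 * (4 * (1 + lam ^ 2 * s) ^ 2) * (1 + s) ^ 2 := by
        gcongr
        · exact one_add_sq_mul_sq_le hlam hs
        · exact one_add_sq_mul_one_add_sq_le p.1 p.2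
    _ = 32 * (lam - 1) ^ 2 * ((1 + lam ^ 2 * s) ^ 2 * (1 + s) ^ 2) := by ring

theorem continuous_utildeDirichletDensity (lam : ℝ) :
    Continuous (utildeDirichletDensity lam) := by
  rw [funext (utildeDirichletDensity_eq lam)]
  simp only [div_eq_mul_inv]
  fun_prop (disch := intros; positivity)

theorem integral_inv_one_add_sq_mul_inv_one_add_sq :
    ∫ p : ℝ × ℝ, (1 + p.1 ^ 2)⁻¹ * (1 + p.2 ^ 2)⁻¹ = Real.pi ^ 2 := by
  rw [pow_two, ← integral_univ_inv_one_add_sq, ← integral_prod_mul]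
  rfl

/-- There is `C > 0` such that for `λ ∈ [1/2, 2]` the map `ũ_λ − ũ_1` is
differentiable with square-integrable derivative and its planar Dirichlet
integral is bounded by `C (λ−1)²`. -/
theorem dirichlet_distance_to_identity_bound :
    ∃ C : ℝ, 0 < C ∧ ∀ lam : ℝ, 1 / 2 ≤ lam → lam ≤ 2 →
      (∀ j : Fin 3,
        Differentiable ℝ (fun p : ℝ × ℝ => utilde lam p j - utilde 1 p j)) ∧
      Integrable (fun p : ℝ × ℝ => ∑ j : Fin 3,
        ((fderiv ℝ (fun q : ℝ × ℝ => utilde lam q j - utilde 1 q j) p (1, 0)) ^ 2 +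
         (fderiv ℝ (fun q : ℝ × ℝ => utilde lam q j - utilde 1 q j) p (0, 1)) ^ 2)) ∧
      (∫ p : ℝ × ℝ, ∑ j : Fin 3,
          ((fderiv ℝ (fun q : ℝ × ℝ => utilde lam q j - utilde 1 q j) p (1, 0)) ^ 2 +
           (fderiv ℝ (fun q : ℝ × ℝ => utilde lam q j - utilde 1 q j) p (0, 1)) ^ 2))
        ≤ C * (lam - 1) ^ 2 := by
  refine ⟨32 * Real.pi ^ 2, by positivity, fun lam hlam _ => ?_⟩
  have hmajor : Integrable fun p : ℝ × ℝ =>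
      32 * (lam - 1) ^ 2 * ((1 + p.1 ^ 2)⁻¹ * (1 + p.2 ^ 2)⁻¹) :=
    (integrable_inv_one_add_sq.mul_prod integrable_inv_one_add_sq).const_mul _
  have hint : Integrable (utildeDirichletDensity lam) :=
    hmajor.mono' (continuous_utildeDirichletDensity lam).aestronglyMeasurable <|
      .of_forall fun p => by
        rw [Real.norm_of_nonneg (by unfold utildeDirichletDensity; positivity)]
        exact utildeDirichletDensity_le hlam p
  refine ⟨fun j => (differentiable_utilde lam j).sub (differentiable_utilde 1 j), hint, ?_⟩
  calc ∫ p, utildeDirichletDensity lam p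
      ≤ ∫ p : ℝ × ℝ, 32 * (lam - 1) ^ 2 * ((1 + p.1 ^ 2)⁻¹ * (1 + p.2 ^ 2)⁻¹) :=
        integral_mono hint hmajor (utildeDirichletDensity_le hlam)
    _ = 32 * Real.pi ^ 2 * (lam - 1) ^ 2 := by
        rw [integral_const_mul, integral_inv_one_add_sq_mul_inv_one_add_sq]
        ring
end

section
/- Phase equation (Euclidean version). Let Ω ⊆ ℝⁿ be open, ε > 0, and let u : Ω → ℝ^N be twice continuously differentiable with u(x) ≠ 0 for every x ∈ Ω, satisfying the Ginzburg–Landau equation −Δu = ε^{-2}(1 − |u|²) u on Ω. Then v := u/|u| satisfies, at every point of Ω, −Δv = |∇v|² v + 2 Σ_{i=1}^{n} (∂_i ln|u|) (∂_i v). -/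
/-!
Write `u = ρ • v` with `ρ = ‖u‖` and `‖v‖ = 1`. The product rule gives
`Δu = ρ Δv + 2 ∑ᵢ ∂ᵢρ ∂ᵢv + (Δρ) v`, and differentiating `‖v‖² = 1` once and twice gives
`⟪v, ∂ᵢv⟫ = 0` and `⟪v, Δv⟫ = -|∇v|²`. Pairing with `v` therefore yields `Δρ = ρ (μ + |∇v|²)`
whenever `Δu = μ u`, and substituting this back into the product rule leaves the phase equation.
The Ginzburg–Landau equation is the case `μ = -(1 - ‖u‖²) / ε²`.
-/

open MeasureTheory RealInnerProductSpace

/-- Partial derivative of `f` along the `i`-th standard coordinate direction. -/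
noncomputable def pd {n : ℕ} {F : Type*} [NormedAddCommGroup F] [NormedSpace ℝ F]
    (f : EuclideanSpace ℝ (Fin n) → F) (i : Fin n) (x : EuclideanSpace ℝ (Fin n)) : F :=
  fderiv ℝ f x (EuclideanSpace.single i 1)

/-- Componentwise Laplacian `Δf = Σ_i ∂_i ∂_i f`. -/
noncomputable def lap {n : ℕ} {F : Type*} [NormedAddCommGroup F] [NormedSpace ℝ F]
    (f : EuclideanSpace ℝ (Fin n) → F) (x : EuclideanSpace ℝ (Fin n)) : F :=
  ∑ i, pd (pd f i) i x

open Filter Topology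

section DirectionalDerivative

variable {E F : Type*} [NormedAddCommGroup E] [NormedSpace ℝ E]
  [NormedAddCommGroup F] [NormedSpace ℝ F] {x : E}

theorem ContDiffAt.differentiableAt_fderiv_apply {f : E → F} (hf : ContDiffAt ℝ 2 f x) (e : E) :
    DifferentiableAt ℝ (fun y => fderiv ℝ f y e) x :=
  ((hf.fderiv_right (m := 1) (by norm_num)).clm_apply contDiffAt_const).differentiableAt
    (by norm_num)

theorem fderiv_fun_smul_apply {ρ : E → ℝ} {v : E → F} {y : E} (hρ : DifferentiableAt ℝ ρ y)
    (hv : DifferentiableAt ℝ v y) (e : E) :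
    fderiv ℝ (fun z => ρ z • v z) y e = ρ y • fderiv ℝ v y e + fderiv ℝ ρ y e • v y := by
  rw [fderiv_fun_smul hρ hv]
  rfl

theorem fderiv_fderiv_smul_apply {ρ : E → ℝ} {v : E → F} (hρ : ContDiffAt ℝ 2 ρ x)
    (hv : ContDiffAt ℝ 2 v x) (e : E) :
    fderiv ℝ (fun y => fderiv ℝ (fun z => ρ z • v z) y e) x e =
      ρ x • fderiv ℝ (fun y => fderiv ℝ v y e) x e + (2 * fderiv ℝ ρ x e) • fderiv ℝ v x e +
        fderiv ℝ (fun y => fderiv ℝ ρ y e) x e • v x := by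
  have hfirst : (fun y => fderiv ℝ (fun z => ρ z • v z) y e) =ᶠ[𝓝 x]
      fun y => ρ y • fderiv ℝ v y e + fderiv ℝ ρ y e • v y := by
    filter_upwards [hρ.eventually (by simp), hv.eventually (by simp)] with y hρy hvy
    exact fderiv_fun_smul_apply (hρy.differentiableAt (by norm_num))
      (hvy.differentiableAt (by norm_num)) e
  have hρ1 := hρ.differentiableAt (by norm_num)
  have hv1 := hv.differentiableAt (by norm_num)
  have hDv := hv.differentiableAt_fderiv_apply e
  have hDρ := hρ.differentiableAt_fderiv_apply e
  rw [hfirst.fderiv_eq, fderiv_fun_add (hρ1.fun_smul hDv) (hDρ.fun_smul hv1),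
    add_apply, fderiv_fun_smul_apply hρ1 hDv, fderiv_fun_smul_apply hDρ hv1]
  module

end DirectionalDerivative

section UnitVectorField

variable {E F : Type*} [NormedAddCommGroup E] [NormedSpace ℝ E]
  [NormedAddCommGroup F] [InnerProductSpace ℝ F] {x : E} {v : E → F}

theorem inner_fderiv_eq_zero_of_norm_eq_one (hv : DifferentiableAt ℝ v x)
    (h1 : ∀ᶠ y in 𝓝 x, ‖v y‖ = 1) (e : E) : ⟪v x, fderiv ℝ v x e⟫ = 0 := by
  have hconst : (fun y => ⟪v y, v y⟫) =ᶠ[𝓝 x] fun _ => (1 : ℝ) := by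
    filter_upwards [h1] with y hy
    rw [real_inner_self_eq_norm_sq, hy, one_pow]
  have h := congrArg (fun L : E →L[ℝ] ℝ => L e) hconst.fderiv_eq
  rw [fderiv_inner_apply ℝ hv hv, fderiv_const_apply, real_inner_comm (v x)] at h
  simpa using h

theorem inner_fderiv_fderiv_eq_neg_norm_sq_of_norm_eq_one (hv : ContDiffAt ℝ 2 v x)
    (h1 : ∀ᶠ y in 𝓝 x, ‖v y‖ = 1) (e : E) :
    ⟪v x, fderiv ℝ (fun y => fderiv ℝ v y e) x e⟫ = -‖fderiv ℝ v x e‖ ^ 2 := by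
  have hzero : (fun y => ⟪v y, fderiv ℝ v y e⟫) =ᶠ[𝓝 x] fun _ => (0 : ℝ) := by
    filter_upwards [hv.eventually (by simp), h1.eventually_nhds] with y hvy h1y
    exact inner_fderiv_eq_zero_of_norm_eq_one (hvy.differentiableAt (by norm_num)) h1y e
  have h := congrArg (fun L : E →L[ℝ] ℝ => L e) hzero.fderiv_eq
  simp only [fderiv_inner_apply ℝ (hv.differentiableAt (by norm_num))
    (hv.differentiableAt_fderiv_apply e), fderiv_const_apply, real_inner_self_eq_norm_sq,
    zero_apply] at h
  linarith

end UnitVectorField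

section Laplacian

variable {n : ℕ} {F : Type*} [NormedAddCommGroup F] {x : EuclideanSpace ℝ (Fin n)}

theorem lap_eq_sum_fderiv_fderiv [NormedSpace ℝ F] (f : EuclideanSpace ℝ (Fin n) → F) :
    lap f x = ∑ i, fderiv ℝ (fun y => fderiv ℝ f y (EuclideanSpace.single i 1)) x
      (EuclideanSpace.single i 1) := rfl

theorem lap_smul [NormedSpace ℝ F] {ρ : EuclideanSpace ℝ (Fin n) → ℝ}
    {v : EuclideanSpace ℝ (Fin n) → F} (hρ : ContDiffAt ℝ 2 ρ x) (hv : ContDiffAt ℝ 2 v x) :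
    lap (fun y => ρ y • v y) x =
      ρ x • lap v x + (2 : ℝ) • ∑ i, pd ρ i x • pd v i x + lap ρ x • v x := by
  simp only [lap_eq_sum_fderiv_fderiv, pd, fderiv_fderiv_smul_apply hρ hv, Finset.sum_add_distrib,
    Finset.smul_sum, Finset.sum_smul, mul_smul]

variable [InnerProductSpace ℝ F]

theorem inner_lap_eq_neg_sum_norm_sq_of_norm_eq_one {v : EuclideanSpace ℝ (Fin n) → F}
    (hv : ContDiffAt ℝ 2 v x) (h1 : ∀ᶠ y in 𝓝 x, ‖v y‖ = 1) :
    ⟪v x, lap v x⟫ = -∑ i, ‖pd v i x‖ ^ 2 := by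
  simp only [lap_eq_sum_fderiv_fderiv, inner_sum, pd,
    inner_fderiv_fderiv_eq_neg_norm_sq_of_norm_eq_one hv h1, Finset.sum_neg_distrib]

theorem inner_lap_smul_of_norm_eq_one {ρ : EuclideanSpace ℝ (Fin n) → ℝ}
    {v : EuclideanSpace ℝ (Fin n) → F} (hρ : ContDiffAt ℝ 2 ρ x) (hv : ContDiffAt ℝ 2 v x)
    (h1 : ∀ᶠ y in 𝓝 x, ‖v y‖ = 1) :
    ⟪v x, lap (fun y => ρ y • v y) x⟫ = lap ρ x - ρ x * ∑ i, ‖pd v i x‖ ^ 2 := by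
  have hcross : ⟪v x, ∑ i, pd ρ i x • pd v i x⟫ = 0 := by
    simp only [pd, inner_sum, real_inner_smul_right,
      inner_fderiv_eq_zero_of_norm_eq_one (hv.differentiableAt (by norm_num)) h1, mul_zero,
      Finset.sum_const_zero]
  rw [lap_smul hρ hv, inner_add_right, inner_add_right, real_inner_smul_right,
    real_inner_smul_right, real_inner_smul_right, hcross, real_inner_self_eq_norm_sq,
    h1.self_of_nhds, inner_lap_eq_neg_sum_norm_sq_of_norm_eq_one hv h1]
  ring

theorem neg_lap_inv_norm_smul_of_lap_eq_smul {u : EuclideanSpace ℝ (Fin n) → F}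
    (hu : ContDiffAt ℝ 2 u x) (hx : u x ≠ 0) {μ : ℝ} (hμ : lap u x = μ • u x) :
    -lap (fun y => ‖u y‖⁻¹ • u y) x =
      (∑ i, ‖pd (fun y => ‖u y‖⁻¹ • u y) i x‖ ^ 2) • (‖u x‖⁻¹ • u x) +
        (2 : ℝ) • ∑ i, pd (fun y => Real.log ‖u y‖) i x • pd (fun y => ‖u y‖⁻¹ • u y) i x := by
  set ρ : EuclideanSpace ℝ (Fin n) → ℝ := fun y => ‖u y‖
  set v : EuclideanSpace ℝ (Fin n) → F := fun y => (ρ y)⁻¹ • u y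
  set G := ∑ i, ‖pd v i x‖ ^ 2
  set S := ∑ i, pd ρ i x • pd v i x
  have hρx : ρ x ≠ 0 := norm_ne_zero_iff.2 hx
  have hρ : ContDiffAt ℝ 2 ρ x := hu.norm ℝ hx
  have hv : ContDiffAt ℝ 2 v x := (hρ.inv hρx).smul hu
  have hunit : ∀ᶠ y in 𝓝 x, ‖v y‖ = 1 := by
    filter_upwards [hu.continuousAt.eventually_ne hx] with y hy
    exact norm_smul_inv_norm (𝕜 := ℝ) hy
  have hux : u x = ρ x • v x := (smul_inv_smul₀ hρx (u x)).symm
  have hpolar : (fun y => ρ y • v y) = u := by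
    funext y
    by_cases hy : u y = 0
    · simp [v, hy]
    · exact smul_inv_smul₀ (norm_ne_zero_iff.2 hy) (u y)
  have hlog : ∀ i, pd (fun y => Real.log (ρ y)) i x = (ρ x)⁻¹ * pd ρ i x := fun i => by
    simp only [pd, fderiv.log (hρ.differentiableAt (by norm_num)) hρx]
    rfl
  have hdecomp : μ • u x = ρ x • lap v x + (2 : ℝ) • S + lap ρ x • v x := by
    rw [← hμ, ← lap_smul hρ hv, hpolar]
  have hradial : lap ρ x = ρ x * (μ + G) := by
    have h := inner_lap_smul_of_norm_eq_one hρ hv hunit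
    rw [hpolar, hμ, hux, real_inner_smul_right, real_inner_smul_right,
      real_inner_self_eq_norm_sq, hunit.self_of_nhds] at h
    linear_combination -h
  have hlapv : lap v x = (ρ x)⁻¹ • (μ • u x - (2 : ℝ) • S - lap ρ x • v x) := by
    rw [eq_inv_smul_iff₀ hρx, hdecomp]
    abel
  change -lap v x = G • v x + (2 : ℝ) • ∑ i, pd (fun y => Real.log (ρ y)) i x • pd v i x
  simp only [hlog, mul_smul, ← Finset.smul_sum]
  rw [hlapv, hradial, hux]
  match_scalars
  · field_simp
    ring
  · field_simp

end Laplacian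

theorem phase_equation_general {n N : ℕ} (Ω : Set (EuclideanSpace ℝ (Fin n))) (hΩ : IsOpen Ω)
    (ε : ℝ)
    (u : EuclideanSpace ℝ (Fin n) → EuclideanSpace ℝ (Fin N))
    (hu : ContDiffOn ℝ 2 u Ω)
    (hne : ∀ x ∈ Ω, u x ≠ 0)
    (hGL : ∀ x ∈ Ω, -lap u x = ((1 - ‖u x‖ ^ 2) / ε ^ 2) • u x) :
    ∀ x ∈ Ω,
      -lap (fun y => ‖u y‖⁻¹ • u y) x =
        (∑ i, ‖pd (fun y => ‖u y‖⁻¹ • u y) i x‖ ^ 2) • (‖u x‖⁻¹ • u x) +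
        (2 : ℝ) • ∑ i,
          (pd (fun y => Real.log ‖u y‖) i x) • pd (fun y => ‖u y‖⁻¹ • u y) i x := by
  intro x hx
  refine neg_lap_inv_norm_smul_of_lap_eq_smul (hu.contDiffAt (hΩ.mem_nhds hx)) (hne x hx)
    (μ := -((1 - ‖u x‖ ^ 2) / ε ^ 2)) ?_
  rw [neg_smul, ← hGL x hx, neg_neg]

/-- Phase equation (Euclidean version): if `u` is a `C²` nonvanishing solution of the
Ginzburg–Landau equation `−Δu = ε⁻²(1−|u|²)u` on an open set `Ω`, then `v = u/|u|`
satisfies `−Δv = |∇v|² v + 2 Σ_i (∂_i ln|u|) ∂_i v` on `Ω`. -/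
theorem phase_equation {n N : ℕ} (Ω : Set (EuclideanSpace ℝ (Fin n))) (hΩ : IsOpen Ω)
    (ε : ℝ) (hε : 0 < ε)
    (u : EuclideanSpace ℝ (Fin n) → EuclideanSpace ℝ (Fin N))
    (hu : ContDiffOn ℝ 2 u Ω)
    (hne : ∀ x ∈ Ω, u x ≠ 0)
    (hGL : ∀ x ∈ Ω, -lap u x = ((1 - ‖u x‖ ^ 2) / ε ^ 2) • u x) :
    ∀ x ∈ Ω,
      -lap (fun y => ‖u y‖⁻¹ • u y) x =
        (∑ i, ‖pd (fun y => ‖u y‖⁻¹ • u y) i x‖ ^ 2) • (‖u x‖⁻¹ • u x) +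
        (2 : ℝ) • ∑ i,
          (pd (fun y => Real.log ‖u y‖) i x) • pd (fun y => ‖u y‖⁻¹ • u y) i x :=
  phase_equation_general Ω hΩ ε u hu hne hGL
end

section
/- Weighted divergence form of the phase equation (Euclidean version). Let Ω ⊆ ℝⁿ be open, ε > 0, and let u : Ω → ℝ^N be twice continuously differentiable with u(x) ≠ 0 for every x ∈ Ω, satisfying −Δu = ε^{-2}(1 − |u|²) u on Ω. Then v := u/|u| satisfies, at every point of Ω, Σ_{i=1}^{n} ∂_i(|u|² ∂_i v) = −|u|² |∇v|² v. In particular the vector field Σ_i ∂_i(|u|² ∂_i v) is parallel to v at every point, i.e. its component orthogonal to v vanishes. -/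
open MeasureTheory RealInnerProductSpace

/-- The phase `v = u/|u|` of a nonvanishing map. -/
noncomputable def phase {n N : ℕ}
    (u : EuclideanSpace ℝ (Fin n) → EuclideanSpace ℝ (Fin N))
    (x : EuclideanSpace ℝ (Fin n)) : EuclideanSpace ℝ (Fin N) :=
  ‖u x‖⁻¹ • u x

/-!
Write `ρ = |u|` and `v = u / ρ`. Then `ρ² ∂ᵢv = ρ ∂ᵢu - (∂ᵢρ) u`, and the terms `∂ᵢρ ∂ᵢu` cancel
in its divergence, which is `ρ Δu - (Δρ) u`. By the equation `Δu` is a multiple of `u`, so the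
divergence is a multiple of `v`. The multiple is its component along `v`: differentiating
`⟪ρ² ∂ᵢv, v⟫ = 0` (a consequence of `|v| = 1`) gives `⟪∂ᵢ(ρ² ∂ᵢv), v⟫ = -ρ² |∂ᵢv|²`.
-/

open Filter Topology Finset

section PartialDerivative

variable {n : ℕ} {F : Type*} [NormedAddCommGroup F] [NormedSpace ℝ F]
  {x : EuclideanSpace ℝ (Fin n)} {i : Fin n}

theorem Filter.EventuallyEq.pd_eq {f g : EuclideanSpace ℝ (Fin n) → F} (h : f =ᶠ[𝓝 x] g) :
    pd f i x = pd g i x := by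
  rw [pd, pd, h.fderiv_eq]

theorem pd_sub {f g : EuclideanSpace ℝ (Fin n) → F} (hf : DifferentiableAt ℝ f x)
    (hg : DifferentiableAt ℝ g x) : pd (fun y => f y - g y) i x = pd f i x - pd g i x := by
  simp only [pd, fderiv_fun_sub hf hg, sub_apply]

theorem pd_smul {c : EuclideanSpace ℝ (Fin n) → ℝ} {f : EuclideanSpace ℝ (Fin n) → F}
    (hc : DifferentiableAt ℝ c x) (hf : DifferentiableAt ℝ f x) :
    pd (fun y => c y • f y) i x = c x • pd f i x + pd c i x • f x := by
  simp only [pd, fderiv_fun_smul hc hf, add_apply, smul_apply,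
    ContinuousLinearMap.smulRight_apply]

theorem pd_inv {c : EuclideanSpace ℝ (Fin n) → ℝ} (hc : DifferentiableAt ℝ c x) (h0 : c x ≠ 0) :
    pd (fun y => (c y)⁻¹) i x = -(pd c i x / c x ^ 2) := by
  have h := ((hasDerivAt_inv h0).comp_hasFDerivAt x hc.hasFDerivAt).fderiv
  rw [Function.comp_def] at h
  rw [pd, pd, h]
  simp [div_eq_inv_mul]

theorem pd_inner {G : Type*} [NormedAddCommGroup G] [InnerProductSpace ℝ G]
    {f g : EuclideanSpace ℝ (Fin n) → G} (hf : DifferentiableAt ℝ f x)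
    (hg : DifferentiableAt ℝ g x) :
    pd (fun y => ⟪f y, g y⟫) i x = ⟪pd f i x, g x⟫ + ⟪f x, pd g i x⟫ := by
  rw [pd, fderiv_inner_apply ℝ hf hg, add_comm]; rfl

theorem ContDiffAt.differentiableAt_pd {f : EuclideanSpace ℝ (Fin n) → F}
    (hf : ContDiffAt ℝ 2 f x) : DifferentiableAt ℝ (pd f i) x :=
  ((hf.fderiv_right (m := 1) le_rfl).clm_apply contDiffAt_const).differentiableAt one_ne_zero

theorem sq_smul_pd_inv_smul {c : EuclideanSpace ℝ (Fin n) → ℝ} {f : EuclideanSpace ℝ (Fin n) → F}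
    (hc : DifferentiableAt ℝ c x) (hf : DifferentiableAt ℝ f x) (h0 : c x ≠ 0) :
    c x ^ 2 • pd (fun y => (c y)⁻¹ • f y) i x = c x • pd f i x - pd c i x • f x := by
  rw [pd_smul (c := fun y => (c y)⁻¹) (hc.inv h0) hf, pd_inv hc h0]
  match_scalars <;> field_simp

theorem sum_pd_smul_pd_sub_pd_smul {c : EuclideanSpace ℝ (Fin n) → ℝ}
    {f : EuclideanSpace ℝ (Fin n) → F} (hc : ContDiffAt ℝ 2 c x) (hf : ContDiffAt ℝ 2 f x) :
    ∑ i, pd (fun y => c y • pd f i y - pd c i y • f y) i x = c x • lap f x - lap c x • f x := by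
  have hc1 := hc.differentiableAt two_ne_zero
  have hf1 := hf.differentiableAt two_ne_zero
  have hterm : ∀ i, pd (fun y => c y • pd f i y - pd c i y • f y) i x =
      c x • pd (pd f i) i x - pd (pd c i) i x • f x := by
    intro i
    rw [pd_sub (f := fun y => c y • pd f i y) (g := fun y => pd c i y • f y)
        (hc1.smul hf.differentiableAt_pd) (hc.differentiableAt_pd.smul hf1),
      pd_smul hc1 hf.differentiableAt_pd, pd_smul hc.differentiableAt_pd hf1]
    abel
  simp only [hterm, sum_sub_distrib, lap, smul_sum, sum_smul]

end PartialDerivative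

section InnerProduct

variable {n : ℕ} {F : Type*} [NormedAddCommGroup F] [InnerProductSpace ℝ F]
  {x : EuclideanSpace ℝ (Fin n)} {i : Fin n}

theorem inner_pd_eq_zero_of_eventually_norm_eq_one {v : EuclideanSpace ℝ (Fin n) → F}
    (hv : DifferentiableAt ℝ v x) (h1 : ∀ᶠ y in 𝓝 x, ‖v y‖ = 1) : ⟪v x, pd v i x⟫ = 0 := by
  have hconst : (fun y => ⟪v y, v y⟫) =ᶠ[𝓝 x] fun _ => (1 : ℝ) :=
    h1.mono fun y hy => by simp [hy]
  have h := pd_inner (i := i) hv hv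
  rw [hconst.pd_eq, pd, fderiv_const_apply, zero_apply, real_inner_comm] at h
  linarith

theorem inner_pd_eq_neg_of_eventually_inner_eq_zero {f v : EuclideanSpace ℝ (Fin n) → F}
    (hf : DifferentiableAt ℝ f x) (hv : DifferentiableAt ℝ v x)
    (h : ∀ᶠ y in 𝓝 x, ⟪f y, v y⟫ = 0) : ⟪pd f i x, v x⟫ = -⟪f x, pd v i x⟫ := by
  have h' := pd_inner (i := i) hf hv
  have hconst : (fun y => ⟪f y, v y⟫) =ᶠ[𝓝 x] fun _ => (0 : ℝ) := h
  rw [hconst.pd_eq, pd, fderiv_const_apply, zero_apply] at h'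
  linarith

end InnerProduct

section Phase

variable {n N : ℕ} {u : EuclideanSpace ℝ (Fin n) → EuclideanSpace ℝ (Fin N)}
  {x : EuclideanSpace ℝ (Fin n)}

theorem norm_phase (h0 : u x ≠ 0) : ‖phase u x‖ = 1 := by
  rw [phase, norm_smul, norm_inv, norm_norm, inv_mul_cancel₀ (norm_ne_zero_iff.2 h0)]

theorem ContDiffAt.phase {k : WithTop ℕ∞} (hu : ContDiffAt ℝ k u x) (h0 : u x ≠ 0) :
    ContDiffAt ℝ k (phase u) x :=
  ((hu.norm ℝ h0).inv (norm_ne_zero_iff.2 h0)).smul hu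

theorem eventually_inner_phase_pd_phase_eq_zero (hu : ContDiffAt ℝ 2 u x) (h0 : u x ≠ 0)
    (i : Fin n) : ∀ᶠ y in 𝓝 x, ⟪phase u y, pd (phase u) i y⟫ = 0 := by
  filter_upwards [hu.eventually (by simp), (hu.continuousAt.eventually_ne h0).eventually_nhds]
    with y hy hy0
  exact inner_pd_eq_zero_of_eventually_norm_eq_one
    ((hy.phase hy0.self_of_nhds).differentiableAt two_ne_zero) (hy0.mono fun _ => norm_phase)

theorem inner_sum_pd_sq_norm_smul_pd_phase (hu : ContDiffAt ℝ 2 u x) (h0 : u x ≠ 0) :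
    ⟪∑ i, pd (fun y => ‖u y‖ ^ 2 • pd (phase u) i y) i x, phase u x⟫ =
      -(‖u x‖ ^ 2 * ∑ i, ‖pd (phase u) i x‖ ^ 2) := by
  have hv := hu.phase h0
  rw [sum_inner, mul_sum, ← sum_neg_distrib]
  refine sum_congr rfl fun i _ => ?_
  have horth : ∀ᶠ y in 𝓝 x, ⟪‖u y‖ ^ 2 • pd (phase u) i y, phase u y⟫ = 0 :=
    (eventually_inner_phase_pd_phase_eq_zero hu h0 i).mono fun y hy => by
      rw [real_inner_smul_left, real_inner_comm, hy, mul_zero]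
  rw [inner_pd_eq_neg_of_eventually_inner_eq_zero (f := fun y => ‖u y‖ ^ 2 • pd (phase u) i y)
    (((hu.norm_sq ℝ).differentiableAt two_ne_zero).smul hv.differentiableAt_pd)
    (hv.differentiableAt two_ne_zero) horth, real_inner_smul_left, real_inner_self_eq_norm_sq]

theorem exists_sum_pd_sq_norm_smul_pd_phase_eq_smul (hu : ContDiffAt ℝ 2 u x) (h0 : u x ≠ 0)
    {c : ℝ} (hlap : lap u x = c • u x) :
    ∃ s : ℝ, ∑ i, pd (fun y => ‖u y‖ ^ 2 • pd (phase u) i y) i x = s • phase u x := by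
  have hflux : ∀ i, (fun y => ‖u y‖ ^ 2 • pd (phase u) i y) =ᶠ[𝓝 x]
      fun y => ‖u y‖ • pd u i y - pd (fun z => ‖u z‖) i y • u y := by
    intro i
    filter_upwards [hu.eventually (by simp), hu.continuousAt.eventually_ne h0] with y hy hy0
    exact sq_smul_pd_inv_smul ((hy.norm ℝ hy0).differentiableAt two_ne_zero)
      (hy.differentiableAt two_ne_zero) (norm_ne_zero_iff.2 hy0)
  refine ⟨‖u x‖ * (‖u x‖ * c - lap (fun z => ‖u z‖) x), ?_⟩
  rw [sum_congr rfl fun i _ => (hflux i).pd_eq,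
    sum_pd_smul_pd_sub_pd_smul (hu.norm ℝ h0) hu, hlap, phase, smul_smul, smul_smul, ← sub_smul]
  congr 1
  field_simp [norm_ne_zero_iff.2 h0]

end Phase

theorem phase_equation_divergence_form_general {n N : ℕ}
    (Ω : Set (EuclideanSpace ℝ (Fin n))) (hΩ : IsOpen Ω)
    (ε : ℝ)
    (u : EuclideanSpace ℝ (Fin n) → EuclideanSpace ℝ (Fin N))
    (hu : ContDiffOn ℝ 2 u Ω)
    (hne : ∀ x ∈ Ω, u x ≠ 0)
    (hGL : ∀ x ∈ Ω, -lap u x = ((1 - ‖u x‖ ^ 2) / ε ^ 2) • u x) :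
    ∀ x ∈ Ω,
      (∑ i, pd (fun y => ‖u y‖ ^ 2 • pd (phase u) i y) i x) =
        -((‖u x‖ ^ 2 * ∑ i, ‖pd (phase u) i x‖ ^ 2) • phase u x) ∧
      (∑ i, pd (fun y => ‖u y‖ ^ 2 • pd (phase u) i y) i x) -
        ⟪(∑ i, pd (fun y => ‖u y‖ ^ 2 • pd (phase u) i y) i x), phase u x⟫ • phase u x
        = 0 := by
  intro x hx
  have hux : ContDiffAt ℝ 2 u x := hu.contDiffAt (hΩ.mem_nhds hx)
  have hlap : lap u x = -((1 - ‖u x‖ ^ 2) / ε ^ 2) • u x := by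
    rw [neg_smul, ← hGL x hx, neg_neg]
  obtain ⟨s, hs⟩ := exists_sum_pd_sq_norm_smul_pd_phase_eq_smul hux (hne x hx) hlap
  have hinner := inner_sum_pd_sq_norm_smul_pd_phase hux (hne x hx)
  have hs' : s = -(‖u x‖ ^ 2 * ∑ i, ‖pd (phase u) i x‖ ^ 2) := by
    rwa [hs, real_inner_smul_left, real_inner_self_eq_norm_sq, norm_phase (hne x hx), one_pow,
      mul_one] at hinner
  exact ⟨by rw [hs, hs', neg_smul], by rw [hinner, hs, hs', neg_smul, sub_self]⟩

/-- Weighted divergence form of the phase equation (Euclidean version):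
`Σ_i ∂_i(|u|² ∂_i v) = −|u|²|∇v|² v` on `Ω`, and in particular the component of
`Σ_i ∂_i(|u|² ∂_i v)` orthogonal to `v` vanishes. -/
theorem phase_equation_divergence_form {n N : ℕ}
    (Ω : Set (EuclideanSpace ℝ (Fin n))) (hΩ : IsOpen Ω)
    (ε : ℝ) (hε : 0 < ε)
    (u : EuclideanSpace ℝ (Fin n) → EuclideanSpace ℝ (Fin N))
    (hu : ContDiffOn ℝ 2 u Ω)
    (hne : ∀ x ∈ Ω, u x ≠ 0)
    (hGL : ∀ x ∈ Ω, -lap u x = ((1 - ‖u x‖ ^ 2) / ε ^ 2) • u x) :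
    ∀ x ∈ Ω,
      (∑ i, pd (fun y => ‖u y‖ ^ 2 • pd (phase u) i y) i x) =
        -((‖u x‖ ^ 2 * ∑ i, ‖pd (phase u) i x‖ ^ 2) • phase u x) ∧
      (∑ i, pd (fun y => ‖u y‖ ^ 2 • pd (phase u) i y) i x) -
        ⟪(∑ i, pd (fun y => ‖u y‖ ^ 2 • pd (phase u) i y) i x), phase u x⟫ • phase u x
        = 0 :=
  phase_equation_divergence_form_general Ω hΩ ε u hu hne hGL
end

section
/- Coefficientwise coercivity of the Ginzburg–Landau second variation at the rotation. There exists ε₀ > 0 such that for every ε ∈ (0, ε₀), every integer l ≥ 2, and all real numbers a, b, c: ( l(l+1) + 2(1−2ε²)/ε² ) a² + ( l(l+1) − 2 )( b² + c² ) + 4 √(l(l+1)) a b ≥ (1/4) l(l+1) ( a² + b² + c² ). -/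
/-- Coefficientwise coercivity of the Ginzburg–Landau second variation at the
rotation critical point `u₀(x) = √(1−2ε²) x`: there is `ε₀ > 0` such that for all
`ε ∈ (0, ε₀)`, integers `l ≥ 2` and reals `a, b, c`,
`(l(l+1) + 2(1−2ε²)/ε²)a² + (l(l+1)−2)(b²+c²) + 4√(l(l+1)) a b
  ≥ (1/4) l(l+1)(a²+b²+c²)`. -/
theorem second_variation_block_coercivity :
    ∃ ε₀ : ℝ, 0 < ε₀ ∧
      ∀ ε : ℝ, 0 < ε → ε < ε₀ →
        ∀ l : ℕ, 2 ≤ l →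
          ∀ a b c : ℝ,
            ((l : ℝ) * ((l : ℝ) + 1) + 2 * (1 - 2 * ε ^ 2) / ε ^ 2) * a ^ 2 +
              ((l : ℝ) * ((l : ℝ) + 1) - 2) * (b ^ 2 + c ^ 2) +
              4 * Real.sqrt ((l : ℝ) * ((l : ℝ) + 1)) * a * b ≥
            (1 / 4) * ((l : ℝ) * ((l : ℝ) + 1)) * (a ^ 2 + b ^ 2 + c ^ 2) := by
  refine ⟨1/10, by norm_num, ?_⟩
  intro ε hε hε' l hl a b c
  set L : ℝ := (l : ℝ) * ((l : ℝ) + 1) with hLdef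
  have hl' : (2 : ℝ) ≤ (l : ℝ) := by exact_mod_cast hl
  have hL6 : (6 : ℝ) ≤ L := by nlinarith
  have hLpos : (0 : ℝ) < L := by linarith
  set s : ℝ := Real.sqrt L with hsdef
  have hs2 : s ^ 2 = L := Real.sq_sqrt hLpos.le
  have hs0 : 0 ≤ s := Real.sqrt_nonneg _
  have he2 : (0 : ℝ) < ε ^ 2 := by positivity
  have hK : (10 : ℝ) ≤ 2 * (1 - 2 * ε ^ 2) / ε ^ 2 := by
    rw [le_div_iff₀ he2]
    nlinarith
  set K : ℝ := 2 * (1 - 2 * ε ^ 2) / ε ^ 2 with hKdef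
  have hB : (0:ℝ) ≤ 3/4 * L - 2 := by linarith
  have hAB : (0:ℝ) ≤ (3/4 * L + K) * (3/4 * L - 2) - 4 * L := by nlinarith
  nlinarith [sq_nonneg ((3/4 * L - 2) * b + 2 * s * a),
    mul_nonneg hAB (sq_nonneg a), mul_nonneg hB (sq_nonneg c),
    mul_nonneg hB (sq_nonneg b), hs2, hB]
end
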